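/- arXiv:1401.5847 — 11 statements merged into one kernel-verified Lean document; each statement's English description precedes it below -/
import Mathlib

section
/- Let T ∈ (0,∞) be finite and let A, B : [0,T) → ℝ be differentiable with A(t) > 0 and B(t) > 0, satisfying A'(t) = -4(A(t)/B(t))² and B'(t) = -8 + 4·A(t)/B(t) on [0,T). If A(t) → 0 and B(t) → 0 as t → T⁻, then A(t)/B(t) → 1 as t → T⁻. -/
open Filter Set Topology

/-! Along the flow, `u = B / A` solves the linear equation `u' = -(8 / B) (u - 1)`, and since
`B' ≥ -8` while `B → 0`, we have `B ≤ 8 (T - t)`, so `8 / B ≥ 1 / (T - t)`. Hence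
`((u - 1) / (T - t))²` is nonincreasing, i.e. `|B / A - 1| = O(T - t)`, and `A / B → 1`. -/

theorem tendsto_const_mul_sub_nhdsLT (c T : ℝ) :
    Tendsto (fun t => c * (T - t)) (𝓝[<] T) (𝓝 0) :=
  tendsto_nhdsWithin_of_tendsto_nhds <| by
    simpa using (show Continuous fun t => c * (T - t) by fun_prop).tendsto T

section
variable {a T : ℝ}

theorem monotoneOn_Ico_of_hasDerivAt_nonneg {f f' : ℝ → ℝ}
    (hf : ∀ t ∈ Ico a T, HasDerivAt f (f' t) t) (hf' : ∀ t ∈ Ico a T, 0 ≤ f' t) :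
    MonotoneOn f (Ico a T) := by
  refine monotoneOn_of_hasDerivWithinAt_nonneg (f' := f') (convex_Ico a T)
    (fun t ht => (hf t ht).continuousAt.continuousWithinAt) (fun t ht => ?_) (fun t ht => ?_)
  all_goals rw [interior_Ico] at ht
  exacts [(hf t (Ioo_subset_Ico_self ht)).hasDerivWithinAt, hf' t (Ioo_subset_Ico_self ht)]

theorem le_mul_sub_of_hasDerivAt_ge_of_tendsto_zero {B B' : ℝ → ℝ} {c : ℝ}
    (hB : ∀ t ∈ Ico a T, HasDerivAt B (B' t) t) (hB' : ∀ t ∈ Ico a T, -c ≤ B' t)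
    (hlim : Tendsto B (𝓝[<] T) (𝓝 0)) {t : ℝ} (ht : t ∈ Ico a T) : B t ≤ c * (T - t) := by
  have hmono : MonotoneOn (fun s => B s - c * (T - s)) (Ico a T) :=
    monotoneOn_Ico_of_hasDerivAt_nonneg
      (fun s hs => (hB s hs).sub (((hasDerivAt_id s).const_sub T).const_mul c))
      (fun s hs => by linarith [hB' s hs])
  have hev : ∀ᶠ s in 𝓝[<] T, B t - c * (T - t) ≤ B s - c * (T - s) := by
    filter_upwards [Ioo_mem_nhdsLT ht.2] with s hs
    exact hmono ht ⟨ht.1.trans hs.1.le, hs.2⟩ hs.1.le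
  have := ge_of_tendsto (by simpa using hlim.sub (tendsto_const_mul_sub_nhdsLT c T)) hev
  linarith

theorem antitoneOn_sq_div_of_hasDerivAt_eq_neg_mul {w k : ℝ → ℝ}
    (hw : ∀ t ∈ Ico a T, HasDerivAt w (-(k t * w t)) t)
    (hk : ∀ t ∈ Ico a T, (T - t)⁻¹ ≤ k t) :
    AntitoneOn (fun t => (w t / (T - t)) ^ 2) (Ico a T) := by
  have hderiv : ∀ t ∈ Ico a T, HasDerivAt (fun s => -(w s / (T - s)) ^ 2)
      (2 * (w t / (T - t)) ^ 2 * (k t * (T - t) - 1) / (T - t)) t := by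
    intro t ht
    have hTt : T - t ≠ 0 := (sub_pos.2 ht.2).ne'
    refine ((((hw t ht).div ((hasDerivAt_id t).const_sub T) hTt).pow 2).neg).congr_deriv ?_
    norm_num [Pi.div_apply]
    field_simp
    ring
  have hmono := monotoneOn_Ico_of_hasDerivAt_nonneg hderiv fun t ht => by
    have hTt : 0 < T - t := sub_pos.2 ht.2
    have : 1 ≤ k t * (T - t) := by
      simpa [hTt.ne'] using mul_le_mul_of_nonneg_right (hk t ht) hTt.le
    have : 0 ≤ k t * (T - t) - 1 := by linarith
    positivity
  exact fun s hs t ht hst => neg_le_neg_iff.1 (hmono hs ht hst)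

theorem tendsto_zero_of_hasDerivAt_eq_neg_mul {w k : ℝ → ℝ} (haT : a < T)
    (hw : ∀ t ∈ Ico a T, HasDerivAt w (-(k t * w t)) t)
    (hk : ∀ t ∈ Ico a T, (T - t)⁻¹ ≤ k t) :
    Tendsto w (𝓝[<] T) (𝓝 0) := by
  have hbound : ∀ t ∈ Ico a T, |w t| ≤ |w a / (T - a)| * (T - t) := by
    intro t ht
    have hTt : 0 < T - t := sub_pos.2 ht.2
    have := sq_le_sq.1 <|
      antitoneOn_sq_div_of_hasDerivAt_eq_neg_mul hw hk ⟨le_rfl, haT⟩ ht ht.1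
    rwa [abs_div, abs_of_pos hTt, div_le_iff₀ hTt] at this
  refine squeeze_zero_norm' ?_ (tendsto_const_mul_sub_nhdsLT |w a / (T - a)| T)
  filter_upwards [Ioo_mem_nhdsLT haT] with t ht
  exact hbound t (Ioo_subset_Ico_self ht)

end

theorem hasDerivAt_div_sub_one_of_su2 {A B : ℝ → ℝ} {t : ℝ}
    (hA : HasDerivAt A (-4 * (A t / B t) ^ 2) t) (hB : HasDerivAt B (-8 + 4 * (A t / B t)) t)
    (hAt : A t ≠ 0) (hBt : B t ≠ 0) :
    HasDerivAt (fun s => B s / A s - 1) (-(8 / B t * (B t / A t - 1))) t :=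
  ((hB.div hA hAt).sub_const 1).congr_deriv (by field_simp; ring)

theorem su2_ratio_tendsto_one_general (T : ℝ) (hT : 0 < T) (A B : ℝ → ℝ)
    (hA : ∀ t ∈ Set.Ico (0 : ℝ) T, 0 < A t)
    (hB : ∀ t ∈ Set.Ico (0 : ℝ) T, 0 < B t)
    (hA' : ∀ t ∈ Set.Ico (0 : ℝ) T, HasDerivAt A (-4 * (A t / B t) ^ 2) t)
    (hB' : ∀ t ∈ Set.Ico (0 : ℝ) T, HasDerivAt B (-8 + 4 * (A t / B t)) t)
    (hlimB : Tendsto B (nhdsWithin T (Set.Iio T)) (nhds 0)) :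
    Tendsto (fun t => A t / B t) (nhdsWithin T (Set.Iio T)) (nhds 1) := by
  have hB_le : ∀ t ∈ Ico 0 T, B t ≤ 8 * (T - t) :=
    fun t ht => le_mul_sub_of_hasDerivAt_ge_of_tendsto_zero hB'
      (fun s hs => by linarith [div_pos (hA s hs) (hB s hs)]) hlimB ht
  have hu : Tendsto (fun t => B t / A t - 1) (𝓝[<] T) (𝓝 0) := by
    refine tendsto_zero_of_hasDerivAt_eq_neg_mul (k := fun t => 8 / B t) hT
      (fun t ht => hasDerivAt_div_sub_one_of_su2 (hA' t ht) (hB' t ht) (hA t ht).ne'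
        (hB t ht).ne') (fun t ht => ?_)
    have hTt : 0 < T - t := sub_pos.2 ht.2
    rw [le_div_iff₀ (hB t ht), inv_mul_le_iff₀ hTt]
    linarith [hB_le t ht]
  simpa using (hu.add_const 1).inv₀ (by norm_num)

/-- Ricci flow ODE on SU(2) with `B = C`: if both `A` and `B` tend to `0` at the finite
maximal time `T`, then the ratio `A/B` tends to `1` as `t → T⁻`. -/
theorem su2_ratio_tendsto_one (T : ℝ) (hT : 0 < T) (A B : ℝ → ℝ)
    (hA : ∀ t ∈ Set.Ico (0 : ℝ) T, 0 < A t)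
    (hB : ∀ t ∈ Set.Ico (0 : ℝ) T, 0 < B t)
    (hA' : ∀ t ∈ Set.Ico (0 : ℝ) T, HasDerivAt A (-4 * (A t / B t) ^ 2) t)
    (hB' : ∀ t ∈ Set.Ico (0 : ℝ) T, HasDerivAt B (-8 + 4 * (A t / B t)) t)
    (hlimA : Tendsto A (nhdsWithin T (Set.Iio T)) (nhds 0))
    (hlimB : Tendsto B (nhdsWithin T (Set.Iio T)) (nhds 0)) :
    Tendsto (fun t => A t / B t) (nhdsWithin T (Set.Iio T)) (nhds 1) :=
  su2_ratio_tendsto_one_general T hT A B hA hB hA' hB' hlimB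
end

section
/- Let T ∈ (0,∞) be finite and let A, B : [0,T) → ℝ be differentiable with A(t) > 0 and B(t) > 0, satisfying A'(t) = -4(A(t)/B(t))² and B'(t) = -8 + 4·A(t)/B(t) on [0,T), and suppose A(t)/B(t) → 1 as t → T⁻. If A(0)/B(0) < 1/2, then there is a unique t₀ ∈ (0,T) with A(t₀)/B(t₀) = 1/2, and the function φ(t) := (A(t)/B(t))·(1 - A(t)/B(t)) is strictly increasing on [0,t₀], strictly decreasing on [t₀,T), attains its unique maximum at t₀, and φ(t) → 0 as t → T⁻. -/
/-!
The ratio `f = A / B` solves the logistic-type equation `f' = (8 / B) f (1 - f)`. Since `1 - f`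
solves a linear equation, it cannot vanish at a later time unless it vanished initially, so
`0 < f < 1` and `f` is strictly increasing; it therefore crosses `1 / 2` exactly once, at `t₀`.
As `φ = f (1 - f)` is increasing in `f` on `f ≤ 1 / 2` and decreasing on `f ≥ 1 / 2`, `φ` rises up
to `t₀` and falls afterwards, and `φ → 1 * (1 - 1) = 0`.
-/

open Filter Set

theorem eqOn_zero_of_hasDerivAt_smul_self_of_eq_zero_left {E : Type*} [NormedAddCommGroup E]
    [NormedSpace ℝ E] {c : ℝ → ℝ} {h : ℝ → E} {a b : ℝ} (hc : ContinuousOn c (Icc a b))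
    (hh : ∀ t ∈ Icc a b, HasDerivAt h (c t • h t) t) (hb : h b = 0) :
    EqOn h 0 (Icc a b) := by
  obtain ⟨K, hK⟩ := isCompact_Icc.exists_bound_of_continuousOn hc
  have hlip : ∀ t ∈ Ioc a b, LipschitzOnWith K.toNNReal (fun x : E => c t • x) univ := fun t ht =>
    ((lipschitzWith_smul (c t)).weaken <| by
      rw [← NNReal.coe_le_coe, coe_nnnorm]
      exact (hK t (Ioc_subset_Icc_self ht)).trans (Real.le_coe_toNNReal K)).lipschitzOnWith
  have hsub : Ioc a b ⊆ Icc a b := Ioc_subset_Icc_self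
  refine ODE_solution_unique_of_mem_Icc_left hlip
    (fun t ht => (hh t ht).continuousAt.continuousWithinAt)
    (fun t ht => (hh t (hsub ht)).hasDerivWithinAt) (fun _ _ => mem_univ _)
    continuousOn_const
    (fun t _ => by rw [Pi.zero_apply, smul_zero]; exact hasDerivWithinAt_const t _ 0)
    (fun _ _ => mem_univ _) hb

section Logistic

variable {f k : ℝ → ℝ} {a b : ℝ}

theorem lt_one_of_hasDerivAt_logistic (hab : a ≤ b) (hk : ContinuousOn k (Icc a b))
    (hf : ∀ t ∈ Icc a b, HasDerivAt f (k t * (f t * (1 - f t))) t) (ha : f a < 1) :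
    f b < 1 := by
  by_contra! hb
  have hfc : ContinuousOn f (Icc a b) := fun t ht => (hf t ht).continuousAt.continuousWithinAt
  obtain ⟨c, hc, hfc1⟩ := intermediate_value_Icc hab hfc ⟨ha.le, hb⟩
  have hsub : Icc a c ⊆ Icc a b := Icc_subset_Icc_right hc.2
  -- `1 - f` solves the linear equation `y' = -k f y`, so its zero at `c` propagates back to `a`.
  have h_one_sub := eqOn_zero_of_hasDerivAt_smul_self_of_eq_zero_left (h := fun t => 1 - f t)
    (c := fun t => -(k t * f t)) ((hk.mul hfc).neg.mono hsub)
    (fun t ht => ((hf t (hsub ht)).const_sub 1).congr_deriv (by simp only [smul_eq_mul]; ring))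
    (by simp [hfc1]) (left_mem_Icc.2 hc.1)
  simp only [Pi.zero_apply] at h_one_sub
  linarith

theorem strictMonoOn_of_hasDerivAt_logistic (hk : ContinuousOn k (Ico a b))
    (hk_pos : ∀ t ∈ Ico a b, 0 < k t)
    (hf : ∀ t ∈ Ico a b, HasDerivAt f (k t * (f t * (1 - f t))) t)
    (hf_pos : ∀ t ∈ Ico a b, 0 < f t) (ha : f a < 1) : StrictMonoOn f (Ico a b) := by
  have hlt : ∀ t ∈ Ico a b, f t < 1 := fun t ht =>
    lt_one_of_hasDerivAt_logistic ht.1 (hk.mono (Icc_subset_Ico_right ht.2))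
      (fun s hs => hf s (Icc_subset_Ico_right ht.2 hs)) ha
  refine strictMonoOn_of_hasDerivWithinAt_pos (convex_Ico a b)
    (fun t ht => (hf t ht).continuousAt.continuousWithinAt)
    (fun t ht => (hf t (interior_subset ht)).hasDerivWithinAt) fun t ht => ?_
  have ht := interior_subset ht
  exact mul_pos (hk_pos t ht) (mul_pos (hf_pos t ht) (sub_pos.2 (hlt t ht)))

end Logistic

theorem strictMonoOn_mul_one_sub : StrictMonoOn (fun x : ℝ => x * (1 - x)) (Iic (1 / 2)) :=
  fun x hx y hy hxy => by simp only [mem_Iic] at hx hy; nlinarith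

theorem strictAntiOn_mul_one_sub : StrictAntiOn (fun x : ℝ => x * (1 - x)) (Ici (1 / 2)) :=
  fun x hx y hy hxy => by simp only [mem_Ici] at hx hy; nlinarith

theorem exists_mem_Ioo_eq_of_tendsto_nhdsLT {f : ℝ → ℝ} {a b y L : ℝ} (hab : a < b)
    (hf : ContinuousOn f (Ico a b)) (hlim : Tendsto f (nhdsWithin b (Iio b)) (nhds L))
    (ha : f a < y) (hL : y < L) : ∃ t ∈ Ioo a b, f t = y := by
  obtain ⟨s, hys, hs⟩ : ∃ s, y < f s ∧ s ∈ Ioo a b :=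
    ((hlim.eventually (eventually_gt_nhds hL)).and (Ioo_mem_nhdsLT hab)).exists
  obtain ⟨t, ht, hft⟩ := intermediate_value_Ioo hs.1.le (hf.mono (Icc_subset_Ico_right hs.2))
    ⟨ha, hys⟩
  exact ⟨t, Ioo_subset_Ioo_right hs.2.le ht, hft⟩

theorem hasDerivAt_div_su2RicciFlow {A B : ℝ → ℝ} {t : ℝ} (hB : B t ≠ 0)
    (hA' : HasDerivAt A (-4 * (A t / B t) ^ 2) t) (hB' : HasDerivAt B (-8 + 4 * (A t / B t)) t) :
    HasDerivAt (fun t => A t / B t) (8 / B t * (A t / B t * (1 - A t / B t))) t :=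
  (hA'.div hB' hB).congr_deriv (by field_simp; ring)

/-- Ricci flow ODE on SU(2) with `B = C`, case `A₀/B₀ < 1/2`: the function
`φ = (A/B)(1 - A/B)` increases up to the unique time `t₀` where `A/B = 1/2`,
then decreases, attaining its unique maximum at `t₀`, and `φ → 0` as `t → T⁻`. -/
theorem su2_L1_norm_small_initial_ratio (T : ℝ) (hT : 0 < T) (A B : ℝ → ℝ)
    (hA : ∀ t ∈ Set.Ico (0 : ℝ) T, 0 < A t)
    (hB : ∀ t ∈ Set.Ico (0 : ℝ) T, 0 < B t)
    (hA' : ∀ t ∈ Set.Ico (0 : ℝ) T, HasDerivAt A (-4 * (A t / B t) ^ 2) t)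
    (hB' : ∀ t ∈ Set.Ico (0 : ℝ) T, HasDerivAt B (-8 + 4 * (A t / B t)) t)
    (hlim : Tendsto (fun t => A t / B t) (nhdsWithin T (Set.Iio T)) (nhds 1))
    (h0 : A 0 / B 0 < 1 / 2) :
    ∃ t₀ ∈ Set.Ioo (0 : ℝ) T, A t₀ / B t₀ = 1 / 2 ∧
      (∀ t ∈ Set.Ioo (0 : ℝ) T, A t / B t = 1 / 2 → t = t₀) ∧
      StrictMonoOn (fun t => (A t / B t) * (1 - A t / B t)) (Set.Icc 0 t₀) ∧
      StrictAntiOn (fun t => (A t / B t) * (1 - A t / B t)) (Set.Ico t₀ T) ∧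
      (∀ t ∈ Set.Ico (0 : ℝ) T, t ≠ t₀ →
        (A t / B t) * (1 - A t / B t) < (A t₀ / B t₀) * (1 - A t₀ / B t₀)) ∧
      Tendsto (fun t => (A t / B t) * (1 - A t / B t))
        (nhdsWithin T (Set.Iio T)) (nhds 0) := by
  set f : ℝ → ℝ := fun t => A t / B t
  have hf' : ∀ t ∈ Ico 0 T, HasDerivAt f (8 / B t * (f t * (1 - f t))) t := fun t ht =>
    hasDerivAt_div_su2RicciFlow (hB t ht).ne' (hA' t ht) (hB' t ht)
  have hfc : ContinuousOn f (Ico 0 T) := fun t ht => (hf' t ht).continuousAt.continuousWithinAt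
  have hBc : ContinuousOn B (Ico 0 T) := fun t ht => (hB' t ht).continuousAt.continuousWithinAt
  have hf_mono : StrictMonoOn f (Ico 0 T) :=
    strictMonoOn_of_hasDerivAt_logistic (continuousOn_const.div hBc fun t ht => (hB t ht).ne')
      (fun t ht => div_pos (by norm_num) (hB t ht)) hf'
      (fun t ht => div_pos (hA t ht) (hB t ht)) (by linarith)
  obtain ⟨t₀, ht₀, hft₀⟩ := exists_mem_Ioo_eq_of_tendsto_nhdsLT hT hfc hlim h0 (by norm_num)
  have ht₀' : t₀ ∈ Ico 0 T := Ioo_subset_Ico_self ht₀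
  have hφ_mono : StrictMonoOn (fun t => f t * (1 - f t)) (Icc 0 t₀) :=
    strictMonoOn_mul_one_sub.comp (hf_mono.mono (Icc_subset_Ico_right ht₀.2)) fun t ht =>
      hft₀ ▸ hf_mono.monotoneOn ⟨ht.1, ht.2.trans_lt ht₀.2⟩ ht₀' ht.2
  have hφ_anti : StrictAntiOn (fun t => f t * (1 - f t)) (Ico t₀ T) :=
    strictAntiOn_mul_one_sub.comp_strictMonoOn (hf_mono.mono (Ico_subset_Ico_left ht₀.1.le))
      fun t ht => hft₀ ▸ hf_mono.monotoneOn ht₀' ⟨ht₀.1.le.trans ht.1, ht.2⟩ ht.1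
  refine ⟨t₀, ht₀, hft₀, fun t ht hft => hf_mono.injOn (Ioo_subset_Ico_self ht) ht₀'
    (hft.trans hft₀.symm), hφ_mono, hφ_anti, fun t ht hne => ?_, ?_⟩
  · rcases hne.lt_or_gt with hlt | hgt
    · exact hφ_mono ⟨ht.1, hlt.le⟩ (right_mem_Icc.2 ht₀.1.le) hlt
    · exact hφ_anti (left_mem_Ico.2 ht₀.2) ⟨hgt.le, ht.2⟩ hgt
  · have := hlim.mul (tendsto_const_nhds (x := (1 : ℝ)) |>.sub hlim)
    rwa [sub_self, mul_zero] at this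
end

section
/- Let T ∈ (0,∞] and let A, B, C : [0,T) → ℝ be differentiable with A(t), B(t), C(t) > 0, satisfying A' = 4(B² − A²)/(BC), B' = 4(A² − B²)/(AC), and C' = 4(A − B)²/(AB). Then A(t)·B(t) = A(0)·B(0) and C(t)·(A(t) + B(t)) = C(0)·(A(0) + B(0)) for all t ∈ [0,T). -/
open Set

/-!
Both quantities have vanishing derivative: `(AB)' = 4(B² - A²)/C + 4(A² - B²)/C = 0`, and
`C'(A + B) = 4(A - B)²(A + B)/(AB) = -C(A' + B')`. A function with zero derivative on `[0, t]`
is constant there.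
-/

theorem eq_of_hasDerivAt_zero_on_Icc {f : ℝ → ℝ} {a b : ℝ} (hab : a ≤ b)
    (hf : ∀ x ∈ Icc a b, HasDerivAt f 0 x) : f b = f a :=
  constant_of_has_deriv_right_zero (fun x hx => (hf x hx).continuousAt.continuousWithinAt)
    (fun x hx => (hf x (Ico_subset_Icc_self hx)).hasDerivWithinAt) b (right_mem_Icc.2 hab)

section IsomR2Flow

variable {A B C : ℝ → ℝ} {t : ℝ}

theorem hasDerivAt_mul_eq_zero_of_isomR2_flow (hA : A t ≠ 0) (hB : B t ≠ 0)
    (hA' : HasDerivAt A (4 * (B t ^ 2 - A t ^ 2) / (B t * C t)) t)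
    (hB' : HasDerivAt B (4 * (A t ^ 2 - B t ^ 2) / (A t * C t)) t) :
    HasDerivAt (fun u => A u * B u) 0 t := by
  refine (hA'.mul hB').congr_deriv ?_
  field_simp
  ring

theorem hasDerivAt_mul_add_eq_zero_of_isomR2_flow (hA : A t ≠ 0) (hB : B t ≠ 0)
    (hC : C t ≠ 0)
    (hA' : HasDerivAt A (4 * (B t ^ 2 - A t ^ 2) / (B t * C t)) t)
    (hB' : HasDerivAt B (4 * (A t ^ 2 - B t ^ 2) / (A t * C t)) t)
    (hC' : HasDerivAt C (4 * (A t - B t) ^ 2 / (A t * B t)) t) :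
    HasDerivAt (fun u => C u * (A u + B u)) 0 t := by
  refine (hC'.mul (hA'.add hB')).congr_deriv ?_
  simp only [Pi.add_apply]
  field_simp
  ring

end IsomR2Flow

theorem isomR2_conserved_general (T : EReal) (A B C : ℝ → ℝ)
    (hA : ∀ t : ℝ, 0 ≤ t → (t : EReal) < T → 0 < A t)
    (hB : ∀ t : ℝ, 0 ≤ t → (t : EReal) < T → 0 < B t)
    (hC : ∀ t : ℝ, 0 ≤ t → (t : EReal) < T → 0 < C t)
    (hA' : ∀ t : ℝ, 0 ≤ t → (t : EReal) < T →
      HasDerivAt A (4 * ((B t) ^ 2 - (A t) ^ 2) / (B t * C t)) t)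
    (hB' : ∀ t : ℝ, 0 ≤ t → (t : EReal) < T →
      HasDerivAt B (4 * ((A t) ^ 2 - (B t) ^ 2) / (A t * C t)) t)
    (hC' : ∀ t : ℝ, 0 ≤ t → (t : EReal) < T →
      HasDerivAt C (4 * (A t - B t) ^ 2 / (A t * B t)) t) :
    ∀ t : ℝ, 0 ≤ t → (t : EReal) < T →
      A t * B t = A 0 * B 0 ∧ C t * (A t + B t) = C 0 * (A 0 + B 0) := by
  intro t ht0 htT
  have admissible : ∀ s ∈ Icc 0 t, 0 ≤ s ∧ (s : EReal) < T := fun s hs =>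
    ⟨hs.1, (EReal.coe_le_coe_iff.2 hs.2).trans_lt htT⟩
  constructor
  · refine eq_of_hasDerivAt_zero_on_Icc (f := fun u => A u * B u) ht0 fun s hs => ?_
    obtain ⟨hs0, hsT⟩ := admissible s hs
    exact hasDerivAt_mul_eq_zero_of_isomR2_flow (hA s hs0 hsT).ne' (hB s hs0 hsT).ne'
      (hA' s hs0 hsT) (hB' s hs0 hsT)
  · refine eq_of_hasDerivAt_zero_on_Icc (f := fun u => C u * (A u + B u)) ht0 fun s hs => ?_
    obtain ⟨hs0, hsT⟩ := admissible s hs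
    exact hasDerivAt_mul_add_eq_zero_of_isomR2_flow (hA s hs0 hsT).ne' (hB s hs0 hsT).ne'
      (hC s hs0 hsT).ne' (hA' s hs0 hsT) (hB' s hs0 hsT) (hC' s hs0 hsT)

/-- Ricci flow ODE on the universal cover of `Isom(ℝ²)`: the quantities `A·B` and
`C·(A+B)` are conserved along the flow. -/
theorem isomR2_conserved (T : EReal) (hT : 0 < T) (A B C : ℝ → ℝ)
    (hA : ∀ t : ℝ, 0 ≤ t → (t : EReal) < T → 0 < A t)
    (hB : ∀ t : ℝ, 0 ≤ t → (t : EReal) < T → 0 < B t)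
    (hC : ∀ t : ℝ, 0 ≤ t → (t : EReal) < T → 0 < C t)
    (hA' : ∀ t : ℝ, 0 ≤ t → (t : EReal) < T →
      HasDerivAt A (4 * ((B t) ^ 2 - (A t) ^ 2) / (B t * C t)) t)
    (hB' : ∀ t : ℝ, 0 ≤ t → (t : EReal) < T →
      HasDerivAt B (4 * ((A t) ^ 2 - (B t) ^ 2) / (A t * C t)) t)
    (hC' : ∀ t : ℝ, 0 ≤ t → (t : EReal) < T →
      HasDerivAt C (4 * (A t - B t) ^ 2 / (A t * B t)) t) :
    ∀ t : ℝ, 0 ≤ t → (t : EReal) < T →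
      A t * B t = A 0 * B 0 ∧ C t * (A t + B t) = C 0 * (A 0 + B 0) :=
  isomR2_conserved_general T A B C hA hB hC hA' hB' hC'
end

section
/- Let A, B, C : [0,∞) → ℝ be differentiable with A(t), B(t), C(t) > 0, satisfying A' = 4(B² − A²)/(BC), B' = 4(A² − B²)/(AC), C' = 4(A − B)²/(AB), with A(t) ≠ B(t) for all t ≥ 0, and suppose B(t)/A(t) → 1 as t → ∞. Define f(x) = 6x³ − 6x² + 2x + 6x⁻³ − 6x⁻² + 2x⁻¹ − 4 and Φ(t) := √(f(A(t)/B(t)))/C(t). Then Φ is strictly decreasing on [0,∞) and Φ(t) → 0 as t → ∞. -/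
/-!
Write `u = A/B`. The flow gives `u' = 8(1 - u²)/C` and `C' = 4(u - 1)²/u`, so the derivative of
`Φ² = f(u)/C²` is `8 (u(1 - u²) f'(u) - (u - 1)² f(u)) / (u C³)`. Clearing denominators, the
bracket is `-2(u - 1)² (12u⁶ + 9u⁵ + 8u⁴ + 6u³ + 8u² + 9u + 12) / u³ < 0` for `u ≠ 1`, and
`f(u) = (u - 1)²(6u⁴ + 6u³ + 8u² + 6u + 6)/u³ > 0`, so `Φ = √(Φ²)` is strictly decreasing.
For the limit, `u → 1` and `f(1) = 0`, while `C` is nondecreasing, hence `C ≥ C(0) > 0`.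
-/

open Filter Set Topology

lemma strictAntiOn_of_forall_hasDerivAt_neg {D : Set ℝ} (hD : Convex ℝ D) {g g' : ℝ → ℝ}
    (hg : ∀ x ∈ D, HasDerivAt g (g' x) x) (hg' : ∀ x ∈ D, g' x < 0) : StrictAntiOn g D :=
  strictAntiOn_of_hasDerivWithinAt_neg hD (fun x hx ↦ (hg x hx).continuousAt.continuousWithinAt)
    (fun x hx ↦ (hg x (interior_subset hx)).hasDerivWithinAt)
    fun x hx ↦ hg' x (interior_subset hx)

lemma monotoneOn_of_forall_hasDerivAt_nonneg {D : Set ℝ} (hD : Convex ℝ D) {g g' : ℝ → ℝ}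
    (hg : ∀ x ∈ D, HasDerivAt g (g' x) x) (hg' : ∀ x ∈ D, 0 ≤ g' x) : MonotoneOn g D :=
  monotoneOn_of_hasDerivWithinAt_nonneg hD (fun x hx ↦ (hg x hx).continuousAt.continuousWithinAt)
    (fun x hx ↦ (hg x (interior_subset hx)).hasDerivWithinAt)
    fun x hx ↦ hg' x (interior_subset hx)

lemma Filter.Tendsto.div_of_le {ι : Type*} {l : Filter ι} {g C : ι → ℝ} {c : ℝ}
    (hg : Tendsto g l (𝓝 0)) (hg₀ : ∀ᶠ i in l, 0 ≤ g i) (hc : 0 < c)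
    (hC : ∀ᶠ i in l, c ≤ C i) :
    Tendsto (fun i ↦ g i / C i) l (𝓝 0) := by
  refine tendsto_of_tendsto_of_tendsto_of_le_of_le' tendsto_const_nhds
    (by simpa using hg.div_const c) ?_ ?_
  · filter_upwards [hg₀, hC] with i hgi hCi
    exact div_nonneg hgi (hc.trans_le hCi).le
  · filter_upwards [hg₀, hC] with i hgi hCi
    exact div_le_div_of_nonneg_left hgi hc hCi

noncomputable def cyProfile (x : ℝ) : ℝ :=
  6 * x ^ 3 - 6 * x ^ 2 + 2 * x + 6 / x ^ 3 - 6 / x ^ 2 + 2 / x - 4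

noncomputable def cyProfile' (x : ℝ) : ℝ :=
  18 * x ^ 2 - 12 * x + 2 - 18 / x ^ 4 + 12 / x ^ 3 - 2 / x ^ 2

lemma cyProfile_one : cyProfile 1 = 0 := by
  norm_num [cyProfile]

lemma cyProfile_eq {x : ℝ} (hx : x ≠ 0) :
    cyProfile x = (x - 1) ^ 2 * (6 * x ^ 4 + 6 * x ^ 3 + 8 * x ^ 2 + 6 * x + 6) / x ^ 3 := by
  unfold cyProfile
  field_simp
  ring

lemma cyProfile_pos {x : ℝ} (hx : 0 < x) (hx₁ : x ≠ 1) : 0 < cyProfile x := by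
  have : x - 1 ≠ 0 := sub_ne_zero.mpr hx₁
  rw [cyProfile_eq hx.ne']
  positivity

lemma hasDerivAt_cyProfile {x : ℝ} (hx : x ≠ 0) : HasDerivAt cyProfile (cyProfile' x) x := by
  have h₁ := hasDerivAt_id' x
  have h₂ := hasDerivAt_pow 2 x
  have h₃ := hasDerivAt_pow 3 x
  have h := (((((h₃.const_mul 6).sub (h₂.const_mul 6)).add (h₁.const_mul 2)).add
    ((hasDerivAt_const x 6).div h₃ (pow_ne_zero 3 hx))).sub
    ((hasDerivAt_const x 6).div h₂ (pow_ne_zero 2 hx))).add ((hasDerivAt_const x 2).div h₁ hx)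
  refine (h.sub_const 4).congr_deriv ?_
  unfold cyProfile'
  field_simp
  ring

lemma cyProfile_deriv_bracket_eq {x : ℝ} (hx : x ≠ 0) :
    x * (1 - x ^ 2) * cyProfile' x - (x - 1) ^ 2 * cyProfile x =
      -(2 * (x - 1) ^ 2 * (12 * x ^ 6 + 9 * x ^ 5 + 8 * x ^ 4 + 6 * x ^ 3 + 8 * x ^ 2 + 9 * x + 12)
        / x ^ 3) := by
  unfold cyProfile cyProfile'
  field_simp
  ring

lemma cyProfile_deriv_bracket_neg {x : ℝ} (hx : 0 < x) (hx₁ : x ≠ 1) :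
    x * (1 - x ^ 2) * cyProfile' x - (x - 1) ^ 2 * cyProfile x < 0 := by
  have : x - 1 ≠ 0 := sub_ne_zero.mpr hx₁
  rw [cyProfile_deriv_bracket_eq hx.ne', neg_lt_zero]
  positivity

section RicciFlow

variable {A B C : ℝ → ℝ} {t : ℝ}

lemma hasDerivAt_flow_ratio (hA : A t ≠ 0) (hB : B t ≠ 0) (hC : C t ≠ 0)
    (hA' : HasDerivAt A (4 * (B t ^ 2 - A t ^ 2) / (B t * C t)) t)
    (hB' : HasDerivAt B (4 * (A t ^ 2 - B t ^ 2) / (A t * C t)) t) :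
    HasDerivAt (fun s ↦ A s / B s) (8 * (1 - (A t / B t) ^ 2) / C t) t := by
  refine (hA'.div hB' hB).congr_deriv ?_
  field_simp
  ring

lemma hasDerivAt_flow_cyProfile_div_sq (hA : 0 < A t) (hB : 0 < B t) (hC : 0 < C t)
    (hA' : HasDerivAt A (4 * (B t ^ 2 - A t ^ 2) / (B t * C t)) t)
    (hB' : HasDerivAt B (4 * (A t ^ 2 - B t ^ 2) / (A t * C t)) t)
    (hC' : HasDerivAt C (4 * (A t - B t) ^ 2 / (A t * B t)) t) :
    HasDerivAt (fun s ↦ cyProfile (A s / B s) / C s ^ 2)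
      (8 * ((A t / B t) * (1 - (A t / B t) ^ 2) * cyProfile' (A t / B t)
        - (A t / B t - 1) ^ 2 * cyProfile (A t / B t)) / ((A t / B t) * C t ^ 3)) t := by
  have hratio := hasDerivAt_flow_ratio hA.ne' hB.ne' hC.ne' hA' hB'
  have hf := (hasDerivAt_cyProfile (div_pos hA hB).ne').comp t hratio
  refine (hf.div (hC'.pow 2) (pow_ne_zero 2 hC.ne')).congr_deriv ?_
  simp only [Function.comp_apply, Pi.pow_apply]
  field_simp
  ring

lemma strictAntiOn_flow_cyProfile_div_sq (hA : ∀ t, 0 ≤ t → 0 < A t)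
    (hB : ∀ t, 0 ≤ t → 0 < B t) (hC : ∀ t, 0 ≤ t → 0 < C t)
    (hA' : ∀ t, 0 ≤ t → HasDerivAt A (4 * (B t ^ 2 - A t ^ 2) / (B t * C t)) t)
    (hB' : ∀ t, 0 ≤ t → HasDerivAt B (4 * (A t ^ 2 - B t ^ 2) / (A t * C t)) t)
    (hC' : ∀ t, 0 ≤ t → HasDerivAt C (4 * (A t - B t) ^ 2 / (A t * B t)) t)
    (hne : ∀ t, 0 ≤ t → A t ≠ B t) :
    StrictAntiOn (fun t ↦ cyProfile (A t / B t) / C t ^ 2) (Ici 0) := by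
  refine strictAntiOn_of_forall_hasDerivAt_neg (convex_Ici 0)
    (fun t ht ↦ hasDerivAt_flow_cyProfile_div_sq (hA t ht) (hB t ht) (hC t ht)
      (hA' t ht) (hB' t ht) (hC' t ht)) fun t ht ↦ ?_
  have hu := div_pos (hA t ht) (hB t ht)
  have hbracket := cyProfile_deriv_bracket_neg hu (div_ne_one_of_ne (hne t ht))
  have := hC t ht
  exact div_neg_of_neg_of_pos (by linarith) (by positivity)

lemma monotoneOn_flow_C (hA : ∀ t, 0 ≤ t → 0 < A t) (hB : ∀ t, 0 ≤ t → 0 < B t)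
    (hC' : ∀ t, 0 ≤ t → HasDerivAt C (4 * (A t - B t) ^ 2 / (A t * B t)) t) :
    MonotoneOn C (Ici 0) :=
  monotoneOn_of_forall_hasDerivAt_nonneg (convex_Ici 0) hC' fun t ht ↦ by
    have := hA t ht
    have := hB t ht
    positivity

end RicciFlow

/-- Ricci flow ODE on the universal cover of `Isom(ℝ²)` with `A ≠ B`: the quantity
`Φ(t) = √(f(A/B))/C`, with `f(x) = 6x³ - 6x² + 2x + 6x⁻³ - 6x⁻² + 2x⁻¹ - 4`,
is strictly decreasing and tends to `0` as `t → ∞`. -/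
theorem isomR2_L1_norm_decreasing (A B C : ℝ → ℝ)
    (hA : ∀ t : ℝ, 0 ≤ t → 0 < A t)
    (hB : ∀ t : ℝ, 0 ≤ t → 0 < B t)
    (hC : ∀ t : ℝ, 0 ≤ t → 0 < C t)
    (hA' : ∀ t : ℝ, 0 ≤ t →
      HasDerivAt A (4 * ((B t) ^ 2 - (A t) ^ 2) / (B t * C t)) t)
    (hB' : ∀ t : ℝ, 0 ≤ t →
      HasDerivAt B (4 * ((A t) ^ 2 - (B t) ^ 2) / (A t * C t)) t)
    (hC' : ∀ t : ℝ, 0 ≤ t →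
      HasDerivAt C (4 * (A t - B t) ^ 2 / (A t * B t)) t)
    (hne : ∀ t : ℝ, 0 ≤ t → A t ≠ B t)
    (hlim : Tendsto (fun t => B t / A t) atTop (nhds 1))
    (f : ℝ → ℝ)
    (hf : ∀ x : ℝ, f x = 6 * x ^ 3 - 6 * x ^ 2 + 2 * x
      + 6 / x ^ 3 - 6 / x ^ 2 + 2 / x - 4) :
    StrictAntiOn (fun t => Real.sqrt (f (A t / B t)) / C t) (Set.Ici 0) ∧
    Tendsto (fun t => Real.sqrt (f (A t / B t)) / C t) atTop (nhds 0) := by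
  obtain rfl : f = cyProfile := funext hf
  have hu_pos t (ht : 0 ≤ t) : 0 < A t / B t := div_pos (hA t ht) (hB t ht)
  have hsq := strictAntiOn_flow_cyProfile_div_sq hA hB hC hA' hB' hC' hne
  have hsqrt t (ht : 0 ≤ t) :
      √(cyProfile (A t / B t)) / C t = √(cyProfile (A t / B t) / C t ^ 2) := by
    rw [Real.sqrt_div' _ (sq_nonneg _), Real.sqrt_sq (hC t ht).le]
  constructor
  · intro s hs t ht hst
    simp only [hsqrt s hs, hsqrt t ht]
    have hf_pos := cyProfile_pos (hu_pos t ht) (div_ne_one_of_ne (hne t ht))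
    exact Real.sqrt_lt_sqrt (div_nonneg hf_pos.le (sq_nonneg _)) (hsq hs ht hst)
  · have hu : Tendsto (fun t ↦ A t / B t) atTop (𝓝 1) := by
      simpa using hlim.inv₀ one_ne_zero
    have hf_lim : Tendsto (fun t ↦ √(cyProfile (A t / B t))) atTop (𝓝 0) := by
      have := (hasDerivAt_cyProfile one_ne_zero).continuousAt.tendsto.comp hu
      simpa [cyProfile_one] using this.sqrt
    have hC_mono := monotoneOn_flow_C hA hB hC'
    exact hf_lim.div_of_le (.of_forall fun _ ↦ Real.sqrt_nonneg _) (hC 0 le_rfl)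
      (eventually_ge_atTop 0 |>.mono fun t ht ↦ hC_mono self_mem_Ici ht ht)
end

section
/- Let A, B : [0,∞) → ℝ be differentiable with A(t) > 0 and B(t) > 0, satisfying A'(t) = -4(A(t)/B(t))² and B'(t) = 4·A(t)/B(t) + 8. Then the function ψ(t) := (A(t)/B(t))·(1 + A(t)/B(t)) is strictly decreasing on [0,∞) and ψ(t) → 0 as t → ∞. -/
open Filter Set

/-!
With `x = A/B` the flow reads `x' = -8x(x+1)/B`, `B' = 4x + 8`. Hence `x` decreases, and with it
`ψ = x(1+x)`; moreover `B' ≤ c := 4x(0) + 8`, so `B(t) ≤ B(0) + ct`. Then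
`(log x)' = -8(x+1)/B ≤ -8/(B(0) + ct)`, whose integral diverges logarithmically, so
`log x → -∞` and `x → 0`.
-/

lemma strictAntiOn_Ici_of_hasDerivAt_neg {f f' : ℝ → ℝ} {a : ℝ}
    (hf : ∀ t, a ≤ t → HasDerivAt f (f' t) t) (hf' : ∀ t, a < t → f' t < 0) :
    StrictAntiOn f (Ici a) :=
  strictAntiOn_of_hasDerivWithinAt_neg (convex_Ici a)
    (fun t ht => (hf t ht).continuousAt.continuousWithinAt)
    (fun t ht => by
      rw [interior_Ici] at ht ⊢
      exact (hf t (le_of_lt ht)).hasDerivWithinAt)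
    (fun t ht => hf' t (by rwa [interior_Ici] at ht))

lemma sub_le_sub_of_hasDerivAt_le {f g f' g' : ℝ → ℝ} {a t : ℝ}
    (hf : ∀ s, a ≤ s → HasDerivAt f (f' s) s) (hg : ∀ s, a ≤ s → HasDerivAt g (g' s) s)
    (hle : ∀ s, a < s → f' s ≤ g' s) (ht : a ≤ t) : f t - f a ≤ g t - g a := by
  have hmono : MonotoneOn (fun s => g s - f s) (Ici a) :=
    monotoneOn_of_hasDerivWithinAt_nonneg (convex_Ici a)
      (fun s hs => ((hg s hs).sub (hf s hs)).continuousAt.continuousWithinAt)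
      (fun s hs => by
        rw [interior_Ici] at hs ⊢
        exact ((hg s (le_of_lt hs)).sub (hf s (le_of_lt hs))).hasDerivWithinAt)
      (fun s hs => sub_nonneg.2 (hle s (by rwa [interior_Ici] at hs)))
  have := hmono self_mem_Ici ht ht
  linarith

namespace SL2RicciFlow

lemma hasDerivAt_ratio {A B : ℝ → ℝ} {t : ℝ} (hBt : B t ≠ 0)
    (hA' : HasDerivAt A (-4 * (A t / B t) ^ 2) t) (hB' : HasDerivAt B (4 * (A t / B t) + 8) t) :
    HasDerivAt (fun s => A s / B s) (-8 * (A t / B t) * (A t / B t + 1) / B t) t :=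
  (hA'.div hB' hBt).congr_deriv (by field_simp; ring)

variable {x B : ℝ → ℝ}

lemma ratio_strictAntiOn (hx : ∀ t, 0 ≤ t → 0 < x t) (hB : ∀ t, 0 ≤ t → 0 < B t)
    (hx' : ∀ t, 0 ≤ t → HasDerivAt x (-8 * x t * (x t + 1) / B t) t) :
    StrictAntiOn x (Ici 0) :=
  strictAntiOn_Ici_of_hasDerivAt_neg hx' fun t ht => by
    have hxt := hx t ht.le
    exact div_neg_of_neg_of_pos (by nlinarith) (hB t ht.le)

lemma le_add_mul_of_antitoneOn (hanti : AntitoneOn x (Ici 0))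
    (hB' : ∀ t, 0 ≤ t → HasDerivAt B (4 * x t + 8) t) {t : ℝ} (ht : 0 ≤ t) :
    B t ≤ B 0 + (4 * x 0 + 8) * t := by
  have := sub_le_sub_of_hasDerivAt_le (g := fun s => (4 * x 0 + 8) * s) hB'
    (fun s _ => (hasDerivAt_id s).const_mul (4 * x 0 + 8) |>.congr_deriv (mul_one _))
    (fun s hs => by linarith [hanti self_mem_Ici (mem_Ici.2 hs.le) hs.le]) ht
  linarith

lemma log_ratio_le (hx : ∀ t, 0 ≤ t → 0 < x t) (hB : ∀ t, 0 ≤ t → 0 < B t)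
    (hx' : ∀ t, 0 ≤ t → HasDerivAt x (-8 * x t * (x t + 1) / B t) t)
    {c : ℝ} (hc : 0 < c) (hBle : ∀ t, 0 ≤ t → B t ≤ B 0 + c * t) {t : ℝ} (ht : 0 ≤ t) :
    Real.log (x t) ≤ Real.log (x 0) - 8 / c * (Real.log (B 0 + c * t) - Real.log (B 0)) := by
  suffices Real.log (x t) - Real.log (x 0) ≤
      -(8 / c) * Real.log (B 0 + c * t) - -(8 / c) * Real.log (B 0 + c * 0) by
    rw [mul_zero, add_zero] at this
    linarith
  have hlin : ∀ s, 0 ≤ s → 0 < B 0 + c * s := fun s hs =>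
    add_pos_of_pos_of_nonneg (hB 0 le_rfl) (mul_nonneg hc.le hs)
  refine sub_le_sub_of_hasDerivAt_le (fun s hs => (hx' s hs).log (hx s hs).ne')
    (fun s hs => ((((hasDerivAt_id s).const_mul c).const_add (B 0)).log (hlin s hs).ne').const_mul
      (-(8 / c))) (fun s hs => ?_) ht
  have hxs := hx s hs.le
  have hBs := hB s hs.le
  calc -8 * x s * (x s + 1) / B s / x s = -8 * (x s + 1) / B s := by field_simp
    _ ≤ -8 / B s := by gcongr; linarith
    _ ≤ -8 / (B 0 + c * s) := by
      rw [neg_div, neg_div, neg_le_neg_iff]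
      exact div_le_div_of_nonneg_left (by norm_num) hBs (hBle s hs.le)
    _ = _ := by simp only [id, mul_one]; field_simp

lemma ratio_tendsto_zero (hx : ∀ t, 0 ≤ t → 0 < x t) (hB : ∀ t, 0 ≤ t → 0 < B t)
    (hx' : ∀ t, 0 ≤ t → HasDerivAt x (-8 * x t * (x t + 1) / B t) t)
    (hB' : ∀ t, 0 ≤ t → HasDerivAt B (4 * x t + 8) t) :
    Tendsto x atTop (nhds 0) := by
  set c := 4 * x 0 + 8
  have hc : 0 < c := by linarith [hx 0 le_rfl]
  have hBle : ∀ t, 0 ≤ t → B t ≤ B 0 + c * t := fun t ht =>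
    le_add_mul_of_antitoneOn (ratio_strictAntiOn hx hB hx').antitoneOn hB' ht
  have hbound : Tendsto (fun t => Real.log (x 0) - 8 / c * (Real.log (B 0 + c * t) -
      Real.log (B 0))) atTop atBot :=
    tendsto_atBot_add_const_left _ _ <| tendsto_neg_atTop_atBot.comp <|
      (tendsto_atTop_add_const_right _ _ (Real.tendsto_log_atTop.comp
        (tendsto_atTop_add_const_left _ _ (tendsto_id.const_mul_atTop hc)))).const_mul_atTop
        (by positivity)
  have hlog : Tendsto (fun t => Real.log (x t)) atTop atBot := by
    refine tendsto_atBot_mono' _ ?_ hbound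
    filter_upwards [eventually_ge_atTop 0] with t ht using log_ratio_le hx hB hx' hc hBle ht
  refine (Real.tendsto_exp_comp_nhds_zero.2 hlog).congr' ?_
  filter_upwards [eventually_ge_atTop 0] with t ht using Real.exp_log (hx t ht)

end SL2RicciFlow

/-- Ricci flow ODE on the universal cover of `SL(2,ℝ)` with `B = C`: the quantity
`ψ = (A/B)(1 + A/B)` is strictly decreasing on `[0,∞)` and tends to `0` as `t → ∞`. -/
theorem sl2_L1_norm_decreasing (A B : ℝ → ℝ)
    (hA : ∀ t : ℝ, 0 ≤ t → 0 < A t)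
    (hB : ∀ t : ℝ, 0 ≤ t → 0 < B t)
    (hA' : ∀ t : ℝ, 0 ≤ t → HasDerivAt A (-4 * (A t / B t) ^ 2) t)
    (hB' : ∀ t : ℝ, 0 ≤ t → HasDerivAt B (4 * (A t / B t) + 8) t) :
    StrictAntiOn (fun t => (A t / B t) * (1 + A t / B t)) (Set.Ici 0) ∧
    Tendsto (fun t => (A t / B t) * (1 + A t / B t)) atTop (nhds 0) := by
  set x : ℝ → ℝ := fun t => A t / B t
  have hx : ∀ t, 0 ≤ t → 0 < x t := fun t ht => div_pos (hA t ht) (hB t ht)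
  have hx' : ∀ t, 0 ≤ t → HasDerivAt x (-8 * x t * (x t + 1) / B t) t := fun t ht =>
    SL2RicciFlow.hasDerivAt_ratio (hB t ht).ne' (hA' t ht) (hB' t ht)
  constructor
  · intro s hs t ht hst
    have hlt := SL2RicciFlow.ratio_strictAntiOn hx hB hx' hs ht hst
    have hxt := hx t ht
    dsimp only
    nlinarith
  · have hx0 := SL2RicciFlow.ratio_tendsto_zero hx hB hx' hB'
    simpa using hx0.mul (tendsto_const_nhds (x := (1 : ℝ)) |>.add hx0)
end

section
/- Let T ∈ (0,∞] and let A, B, C : [0,T) → ℝ be differentiable with A(t), B(t), C(t) > 0, satisfying A' = 4(C² − A²)/(BC), B' = 4(A + C)²/(AC), and C' = 4(A² − C²)/(AB). Then A(t)·C(t) = A(0)·C(0) and B(t)·(C(t) − A(t)) = B(0)·(C(0) − A(0)) for all t ∈ [0,T). -/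
open Set

/-!
Both quantities have zero derivative along the flow. Writing the equations as
`A' = 4(C² - A²)/(BC)`, `C' = -4(C² - A²)/(AB)`, one gets `(AC)' = 4(C² - A²)/B - 4(C² - A²)/B = 0`,
and `B(C' - A') = 4(A² - C²)(1/A + 1/C) = -4(C - A)(A + C)²/(AC)` cancels `B'(C - A)` exactly.
-/

theorem eq_of_hasDerivAt_eq_zero {E : Type*} [NormedAddCommGroup E] [NormedSpace ℝ E]
    {f : ℝ → E} {a b : ℝ} (hab : a ≤ b) (hf : ∀ x ∈ Icc a b, HasDerivAt f 0 x) : f b = f a :=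
  constant_of_has_deriv_right_zero (fun x hx => (hf x hx).continuousAt.continuousWithinAt)
    (fun x hx => (hf x (Ico_subset_Icc_self hx)).hasDerivWithinAt) b (right_mem_Icc.2 hab)

section IsomMinkowskiFlow

variable {A B C : ℝ → ℝ} {t : ℝ}

theorem hasDerivAt_mul_eq_zero_of_isomMinkowski (hAt : A t ≠ 0) (hCt : C t ≠ 0)
    (hA' : HasDerivAt A (4 * ((C t) ^ 2 - (A t) ^ 2) / (B t * C t)) t)
    (hC' : HasDerivAt C (4 * ((A t) ^ 2 - (C t) ^ 2) / (A t * B t)) t) :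
    HasDerivAt (fun s => A s * C s) 0 t := by
  refine (hA'.mul hC').congr_deriv ?_
  field_simp
  ring

theorem hasDerivAt_mul_sub_eq_zero_of_isomMinkowski (hAt : A t ≠ 0) (hBt : B t ≠ 0)
    (hCt : C t ≠ 0)
    (hA' : HasDerivAt A (4 * ((C t) ^ 2 - (A t) ^ 2) / (B t * C t)) t)
    (hB' : HasDerivAt B (4 * (A t + C t) ^ 2 / (A t * C t)) t)
    (hC' : HasDerivAt C (4 * ((A t) ^ 2 - (C t) ^ 2) / (A t * B t)) t) :
    HasDerivAt (fun s => B s * (C s - A s)) 0 t := by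
  refine (hB'.mul (hC'.sub hA')).congr_deriv ?_
  rw [Pi.sub_apply]
  field_simp
  ring

end IsomMinkowskiFlow

theorem isomMinkowski_conserved_general (T : EReal) (A B C : ℝ → ℝ)
    (hA : ∀ t : ℝ, 0 ≤ t → (t : EReal) < T → 0 < A t)
    (hB : ∀ t : ℝ, 0 ≤ t → (t : EReal) < T → 0 < B t)
    (hC : ∀ t : ℝ, 0 ≤ t → (t : EReal) < T → 0 < C t)
    (hA' : ∀ t : ℝ, 0 ≤ t → (t : EReal) < T →
      HasDerivAt A (4 * ((C t) ^ 2 - (A t) ^ 2) / (B t * C t)) t)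
    (hB' : ∀ t : ℝ, 0 ≤ t → (t : EReal) < T →
      HasDerivAt B (4 * (A t + C t) ^ 2 / (A t * C t)) t)
    (hC' : ∀ t : ℝ, 0 ≤ t → (t : EReal) < T →
      HasDerivAt C (4 * ((A t) ^ 2 - (C t) ^ 2) / (A t * B t)) t) :
    ∀ t : ℝ, 0 ≤ t → (t : EReal) < T →
      A t * C t = A 0 * C 0 ∧ B t * (C t - A t) = B 0 * (C 0 - A 0) := by
  intro t ht htT
  have hdomain : ∀ x ∈ Icc 0 t, 0 ≤ x ∧ (x : EReal) < T := fun x hx =>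
    ⟨hx.1, (EReal.coe_le_coe_iff.2 hx.2).trans_lt htT⟩
  constructor
  · refine eq_of_hasDerivAt_eq_zero (f := fun s => A s * C s) ht fun x hx => ?_
    obtain ⟨hx0, hxT⟩ := hdomain x hx
    exact hasDerivAt_mul_eq_zero_of_isomMinkowski (hA x hx0 hxT).ne' (hC x hx0 hxT).ne'
      (hA' x hx0 hxT) (hC' x hx0 hxT)
  · refine eq_of_hasDerivAt_eq_zero (f := fun s => B s * (C s - A s)) ht fun x hx => ?_
    obtain ⟨hx0, hxT⟩ := hdomain x hx
    exact hasDerivAt_mul_sub_eq_zero_of_isomMinkowski (hA x hx0 hxT).ne' (hB x hx0 hxT).ne'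
      (hC x hx0 hxT).ne' (hA' x hx0 hxT) (hB' x hx0 hxT) (hC' x hx0 hxT)

/-- Ricci flow ODE on the Lie group `Isom(ℝ¹₁)`: the quantities `A·C` and
`B·(C - A)` are conserved along the flow. -/
theorem isomMinkowski_conserved (T : EReal) (hT : 0 < T) (A B C : ℝ → ℝ)
    (hA : ∀ t : ℝ, 0 ≤ t → (t : EReal) < T → 0 < A t)
    (hB : ∀ t : ℝ, 0 ≤ t → (t : EReal) < T → 0 < B t)
    (hC : ∀ t : ℝ, 0 ≤ t → (t : EReal) < T → 0 < C t)
    (hA' : ∀ t : ℝ, 0 ≤ t → (t : EReal) < T →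
      HasDerivAt A (4 * ((C t) ^ 2 - (A t) ^ 2) / (B t * C t)) t)
    (hB' : ∀ t : ℝ, 0 ≤ t → (t : EReal) < T →
      HasDerivAt B (4 * (A t + C t) ^ 2 / (A t * C t)) t)
    (hC' : ∀ t : ℝ, 0 ≤ t → (t : EReal) < T →
      HasDerivAt C (4 * ((A t) ^ 2 - (C t) ^ 2) / (A t * B t)) t) :
    ∀ t : ℝ, 0 ≤ t → (t : EReal) < T →
      A t * C t = A 0 * C 0 ∧ B t * (C t - A t) = B 0 * (C 0 - A 0) :=
  isomMinkowski_conserved_general T A B C hA hB hC hA' hB' hC'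
end

section
/- Let A, B, C : [0,∞) → ℝ be differentiable with A(t), B(t), C(t) > 0, satisfying A' = 4(C² − A²)/(BC), B' = 4(A + C)²/(AC), C' = 4(A² − C²)/(AB), and suppose A(t)/C(t) → 1 as t → ∞. Define Ψ(t) := ((A(t) + C(t))/B(t)) · (6·(A/C)·(A/C − 1) + 6·(C/A)·(C/A − 1) + 8)^{1/2}. Then Ψ is strictly decreasing on [0,∞) and Ψ(t) → 0 as t → ∞. -/
open Filter Set

/-- Ricci flow ODE on the Lie group `Isom(ℝ¹₁)` with `A/C → 1`: the quantity
`Ψ = ((A + C)/B) · √(6(A/C)(A/C - 1) + 6(C/A)(C/A - 1) + 8)` is strictly decreasing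
on `[0,∞)` and tends to `0` as `t → ∞`. -/
theorem isomMinkowski_L1_norm_decreasing (A B C : ℝ → ℝ)
    (hA : ∀ t : ℝ, 0 ≤ t → 0 < A t)
    (hB : ∀ t : ℝ, 0 ≤ t → 0 < B t)
    (hC : ∀ t : ℝ, 0 ≤ t → 0 < C t)
    (hA' : ∀ t : ℝ, 0 ≤ t →
      HasDerivAt A (4 * ((C t) ^ 2 - (A t) ^ 2) / (B t * C t)) t)
    (hB' : ∀ t : ℝ, 0 ≤ t →
      HasDerivAt B (4 * (A t + C t) ^ 2 / (A t * C t)) t)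
    (hC' : ∀ t : ℝ, 0 ≤ t →
      HasDerivAt C (4 * ((A t) ^ 2 - (C t) ^ 2) / (A t * B t)) t)
    (hlim : Tendsto (fun t => A t / C t) atTop (nhds 1)) :
    StrictAntiOn
      (fun t => ((A t + C t) / B t) *
        Real.sqrt (6 * (A t / C t) * (A t / C t - 1)
          + 6 * (C t / A t) * (C t / A t - 1) + 8)) (Set.Ici 0) ∧
    Tendsto
      (fun t => ((A t + C t) / B t) *
        Real.sqrt (6 * (A t / C t) * (A t / C t - 1)
          + 6 * (C t / A t) * (C t / A t - 1) + 8)) atTop (nhds 0) := by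
  set f : ℝ → ℝ := fun t => (A t + C t) / B t with hfdef
  set s : ℝ → ℝ := fun t => A t / C t + C t / A t with hsdef
  set Q : ℝ → ℝ := fun t => 6 * (A t / C t) * (A t / C t - 1)
      + 6 * (C t / A t) * (C t / A t - 1) + 8 with hQdef
  -- basic positivity
  have hfpos : ∀ t : ℝ, 0 ≤ t → 0 < f t := fun t ht => by
    have := hA t ht; have := hB t ht; have := hC t ht; positivity
  have hQs : ∀ t : ℝ, 0 ≤ t → Q t = 6 * (s t) ^ 2 - 6 * (s t) - 4 := by
    intro t ht
    have ha := (hA t ht).ne'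
    have hc := (hC t ht).ne'
    simp only [hQdef, hsdef]
    field_simp
    ring
  have hs2 : ∀ t : ℝ, 0 ≤ t → 2 ≤ s t := by
    intro t ht
    have ha := hA t ht
    have hc := hC t ht
    have hac : 0 < A t * C t := by positivity
    simp only [hsdef]
    rw [div_add_div _ _ hc.ne' ha.ne', le_div_iff₀ (by positivity)]
    nlinarith [sq_nonneg (A t - C t)]
  have hQ8 : ∀ t : ℝ, 0 ≤ t → 8 ≤ Q t := by
    intro t ht
    rw [hQs t ht]
    nlinarith [hs2 t ht]
  -- continuity
  have hfcont : ContinuousOn f (Ici 0) := fun t ht =>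
    (((hA' t ht).continuousAt.add (hC' t ht).continuousAt).div
      (hB' t ht).continuousAt (hB t ht).ne').continuousWithinAt
  have hscont : ContinuousOn s (Ici 0) := fun t ht =>
    (((hA' t ht).continuousAt.div (hC' t ht).continuousAt (hC t ht).ne').add
      ((hC' t ht).continuousAt.div (hA' t ht).continuousAt (hA t ht).ne')).continuousWithinAt
  -- f strictly decreasing
  have hfanti : StrictAntiOn f (Ici 0) := by
    apply strictAntiOn_of_deriv_neg (convex_Ici 0) hfcont
    intro t ht
    rw [interior_Ici] at ht
    have ht0 : (0:ℝ) ≤ t := le_of_lt ht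
    have ha := hA t ht0; have hb := hB t ht0; have hc := hC t ht0
    have hd : HasDerivAt f
        (((4 * ((C t) ^ 2 - (A t) ^ 2) / (B t * C t)
          + 4 * ((A t) ^ 2 - (C t) ^ 2) / (A t * B t)) * B t
          - (A t + C t) * (4 * (A t + C t) ^ 2 / (A t * C t))) / (B t) ^ 2) t :=
      ((hA' t ht0).add (hC' t ht0)).div (hB' t ht0) hb.ne'
    rw [hd.deriv]
    apply div_neg_of_neg_of_pos _ (by positivity)
    have key : (4 * ((C t) ^ 2 - (A t) ^ 2) / (B t * C t)
          + 4 * ((A t) ^ 2 - (C t) ^ 2) / (A t * B t)) * B t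
          - (A t + C t) * (4 * (A t + C t) ^ 2 / (A t * C t))
        = -((4 * (A t + C t) * ((A t - C t) ^ 2 + (A t + C t) ^ 2)) / (A t * C t)) := by
      field_simp
      ring
    rw [key, neg_lt_zero]
    positivity
  -- s antitone
  have hsanti : AntitoneOn s (Ici 0) := by
    have hdiff : ∀ t : ℝ, 0 ≤ t → HasDerivAt s
        ((4 * ((C t) ^ 2 - (A t) ^ 2) / (B t * C t) * C t
          - A t * (4 * ((A t) ^ 2 - (C t) ^ 2) / (A t * B t))) / (C t) ^ 2
        + (4 * ((A t) ^ 2 - (C t) ^ 2) / (A t * B t) * A t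
          - C t * (4 * ((C t) ^ 2 - (A t) ^ 2) / (B t * C t))) / (A t) ^ 2) t := by
      intro t ht
      exact ((hA' t ht).div (hC' t ht) (hC t ht).ne').add
        ((hC' t ht).div (hA' t ht) (hA t ht).ne')
    apply antitoneOn_of_deriv_nonpos (convex_Ici 0) hscont
    · intro t ht
      rw [interior_Ici] at ht
      exact (hdiff t ht.le).differentiableAt.differentiableWithinAt
    · intro t ht
      rw [interior_Ici] at ht
      have ht0 : (0:ℝ) ≤ t := le_of_lt ht
      have ha := hA t ht0; have hb := hB t ht0; have hc := hC t ht0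
      rw [(hdiff t ht0).deriv]
      have key : (4 * ((C t) ^ 2 - (A t) ^ 2) / (B t * C t) * C t
          - A t * (4 * ((A t) ^ 2 - (C t) ^ 2) / (A t * B t))) / (C t) ^ 2
        + (4 * ((A t) ^ 2 - (C t) ^ 2) / (A t * B t) * A t
          - C t * (4 * ((C t) ^ 2 - (A t) ^ 2) / (B t * C t))) / (A t) ^ 2
          = -((8 * ((A t) ^ 2 - (C t) ^ 2) ^ 2) / ((A t) ^ 2 * (C t) ^ 2 * B t)) := by
        field_simp
        ring
      rw [key, neg_nonpos]
      positivity
  -- Q antitone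
  have hQanti : AntitoneOn Q (Ici 0) := by
    intro x hx y hy hxy
    rw [hQs x hx, hQs y hy]
    have h1 := hsanti hx hy hxy
    have h2 := hs2 y hy
    nlinarith [mul_nonneg (sub_nonneg.2 h1) (by linarith : (0:ℝ) ≤ s x + s y - 1)]
  -- strict antitonicity of Ψ
  have hmain : StrictAntiOn
      (fun t => f t * Real.sqrt (Q t)) (Ici 0) := by
    intro x hx y hy hxy
    have hQy : (0:ℝ) < Q y := lt_of_lt_of_le (by norm_num) (hQ8 y hy)
    have hQx : (0:ℝ) < Q x := lt_of_lt_of_le (by norm_num) (hQ8 x hx)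
    have h1 : Real.sqrt (Q y) ≤ Real.sqrt (Q x) :=
      Real.sqrt_le_sqrt (hQanti hx hy hxy.le)
    have h2 : f y < f x := hfanti hx hy hxy
    have h3 : 0 < Real.sqrt (Q x) := Real.sqrt_pos.mpr hQx
    calc f y * Real.sqrt (Q y) ≤ f y * Real.sqrt (Q x) :=
          mul_le_mul_of_nonneg_left h1 (hfpos y hy).le
      _ < f x * Real.sqrt (Q x) := by
          exact mul_lt_mul_of_pos_right h2 h3
  refine ⟨hmain, ?_⟩
  -- the limit
  -- A + C is antitone
  have hSanti : AntitoneOn (fun t => A t + C t) (Ici 0) := by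
    apply antitoneOn_of_deriv_nonpos (convex_Ici 0)
      (fun t ht => ((hA' t ht).continuousAt.add (hC' t ht).continuousAt).continuousWithinAt)
    · intro t ht
      rw [interior_Ici] at ht
      exact ((hA' t ht.le).add (hC' t ht.le)).differentiableAt.differentiableWithinAt
    · intro t ht
      rw [interior_Ici] at ht
      have ht0 : (0:ℝ) ≤ t := le_of_lt ht
      have ha := hA t ht0; have hb := hB t ht0; have hc := hC t ht0
      rw [((hA' t ht0).add (hC' t ht0)).deriv]
      have key : 4 * ((C t) ^ 2 - (A t) ^ 2) / (B t * C t)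
            + 4 * ((A t) ^ 2 - (C t) ^ 2) / (A t * B t)
          = -((4 * (A t + C t) * (A t - C t) ^ 2) / (A t * B t * C t)) := by
        field_simp
        ring
      rw [key, neg_nonpos]
      positivity
  -- B grows at least linearly
  have hBgrow : ∀ t : ℝ, 0 ≤ t → B 0 + 16 * t ≤ B t := by
    have hmono : MonotoneOn (fun t => B t - 16 * t) (Ici 0) := by
      apply monotoneOn_of_deriv_nonneg (convex_Ici 0)
      · exact fun t ht => ((hB' t ht).continuousAt.sub
          ((continuous_const.mul continuous_id).continuousAt)).continuousWithinAt
      · intro t ht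
        rw [interior_Ici] at ht
        have hder : HasDerivAt (fun t => B t - 16 * t)
            (4 * (A t + C t) ^ 2 / (A t * C t) - 16) t :=
          (hB' t ht.le).sub (by simpa using (hasDerivAt_id t).const_mul (16:ℝ))
        exact hder.differentiableAt.differentiableWithinAt
      · intro t ht
        rw [interior_Ici] at ht
        have ht0 : (0:ℝ) ≤ t := le_of_lt ht
        have ha := hA t ht0; have hc := hC t ht0
        have hder : HasDerivAt (fun t => B t - 16 * t)
            (4 * (A t + C t) ^ 2 / (A t * C t) - 16) t :=
          (hB' t ht0).sub (by simpa using (hasDerivAt_id t).const_mul (16:ℝ))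
        rw [hder.deriv]
        have hac : 0 < A t * C t := by positivity
        rw [sub_nonneg, le_div_iff₀ hac]
        nlinarith [sq_nonneg (A t - C t)]
    intro t ht
    have := hmono (self_mem_Ici) ht ht
    simp only [mul_zero, sub_zero] at this
    linarith
  -- squeeze
  set M : ℝ := (A 0 + C 0) * Real.sqrt (Q 0) with hM
  have hQ0 : (0:ℝ) < Q 0 := lt_of_lt_of_le (by norm_num) (hQ8 0 le_rfl)
  have hMnn : 0 ≤ M := by
    have := hA 0 le_rfl; have := hC 0 le_rfl
    positivity
  have hub : ∀ t : ℝ, 0 ≤ t → f t * Real.sqrt (Q t) ≤ M / (B 0 + 16 * t) := by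
    intro t ht
    have hb := hB t ht
    have hBt : B 0 + 16 * t ≤ B t := hBgrow t ht
    have hBlin : 0 < B 0 + 16 * t := by
      have := hB 0 le_rfl; nlinarith
    have hS : A t + C t ≤ A 0 + C 0 := by
      have := hSanti (self_mem_Ici) ht ht
      simpa using this
    have hSqQ : Real.sqrt (Q t) ≤ Real.sqrt (Q 0) :=
      Real.sqrt_le_sqrt (hQanti (self_mem_Ici) ht ht)
    have hSnn : 0 ≤ A t + C t := by
      have := hA t ht; have := hC t ht; linarith
    have hA0 := hA 0 le_rfl; have hC0 := hC 0 le_rfl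
    have h1 : f t * Real.sqrt (Q t) ≤ ((A 0 + C 0) / B t) * Real.sqrt (Q 0) := by
      apply mul_le_mul _ hSqQ (Real.sqrt_nonneg _) (by positivity)
      show (A t + C t) / B t ≤ (A 0 + C 0) / B t
      gcongr
    have h2 : ((A 0 + C 0) / B t) * Real.sqrt (Q 0) ≤ M / (B 0 + 16 * t) := by
      rw [div_mul_eq_mul_div, hM]
      gcongr
    exact h1.trans h2
  have hlb : ∀ t : ℝ, 0 ≤ t → 0 ≤ f t * Real.sqrt (Q t) := by
    intro t ht
    exact mul_nonneg (hfpos t ht).le (Real.sqrt_nonneg _)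
  have hubl : Tendsto (fun t => M / (B 0 + 16 * t)) atTop (nhds 0) := by
    apply Tendsto.div_atTop tendsto_const_nhds
    apply tendsto_atTop_add_const_left
    exact (tendsto_id.const_mul_atTop (by norm_num : (0:ℝ) < 16))
  refine tendsto_of_tendsto_of_tendsto_of_le_of_le' tendsto_const_nhds hubl ?_ ?_
  · filter_upwards [eventually_ge_atTop (0:ℝ)] with t ht using hlb t ht
  · filter_upwards [eventually_ge_atTop (0:ℝ)] with t ht using hub t ht
end

section
/- Define u : ℝ × (−∞,0) → ℝ by u(x,t) = sinh(−t)/(cosh x + cosh t). Then u(x,t) > 0 for all x ∈ ℝ and t < 0, and u satisfies the logarithmic diffusion equation ∂u/∂t(x,t) = ∂²/∂x² (log u)(x,t) for all x ∈ ℝ, t < 0. -/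
open Filter Set

/-- The Rosenau solution profile `u(x,t) = sinh(-t)/(cosh x + cosh t)` is positive and
satisfies the logarithmic diffusion equation `∂u/∂t = ∂²/∂x² (log u)` for `t < 0`. -/
theorem rosenau_log_diffusion (u : ℝ → ℝ → ℝ)
    (hu : ∀ x t : ℝ, u x t = Real.sinh (-t) / (Real.cosh x + Real.cosh t)) :
    ∀ x t : ℝ, t < 0 →
      0 < u x t ∧
      deriv (fun s => u x s) t = deriv (deriv (fun y => Real.log (u y t))) x := by
  intro x t ht
  have hst : 0 < Real.sinh (-t) := Real.sinh_pos_iff.mpr (by linarith)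
  have hD : ∀ y : ℝ, 0 < Real.cosh y + Real.cosh t := fun y => by
    have := Real.cosh_pos (x := y); have := Real.cosh_pos (x := t); linarith
  constructor
  · rw [hu]; exact div_pos hst (hD x)
  · -- time derivative
    have hfun : (fun s => u x s) = fun s => Real.sinh (-s) / (Real.cosh x + Real.cosh s) := by
      funext s; rw [hu]
    have h1 : HasDerivAt (fun s : ℝ => Real.sinh (-s)) (-Real.cosh t) t := by
      have h := (Real.hasDerivAt_sinh (-t)).comp t (hasDerivAt_neg t)
      simp only [Real.cosh_neg, mul_neg_one] at h
      exact h
    have h2 : HasDerivAt (fun s : ℝ => Real.cosh x + Real.cosh s) (Real.sinh t) t :=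
      (Real.hasDerivAt_cosh t).const_add _
    have hT : HasDerivAt (fun s => u x s)
        ((-Real.cosh t * (Real.cosh x + Real.cosh t) - Real.sinh (-t) * Real.sinh t) /
          (Real.cosh x + Real.cosh t) ^ 2) t := by
      rw [hfun]; exact h1.div h2 (hD x).ne'
    -- space derivatives
    have hlog : (fun y => Real.log (u y t)) =
        fun y => Real.log (Real.sinh (-t)) - Real.log (Real.cosh y + Real.cosh t) := by
      funext y; rw [hu, Real.log_div hst.ne' (hD y).ne']
    have hd1 : deriv (fun y => Real.log (u y t)) =
        fun y => -(Real.sinh y / (Real.cosh y + Real.cosh t)) := by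
      funext y
      rw [hlog]
      have hc : HasDerivAt (fun z : ℝ => Real.cosh z + Real.cosh t) (Real.sinh y) y :=
        (Real.hasDerivAt_cosh y).add_const _
      have h := (hc.log (hD y).ne').const_sub (Real.log (Real.sinh (-t)))
      simpa [div_eq_mul_inv, mul_comm] using h.deriv
    have hc : HasDerivAt (fun z : ℝ => Real.cosh z + Real.cosh t) (Real.sinh x) x :=
      (Real.hasDerivAt_cosh x).add_const _
    have hX : HasDerivAt (fun y => -(Real.sinh y / (Real.cosh y + Real.cosh t)))
        (-((Real.cosh x * (Real.cosh x + Real.cosh t) - Real.sinh x * Real.sinh x) /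
          (Real.cosh x + Real.cosh t) ^ 2)) x :=
      ((Real.hasDerivAt_sinh x).div hc (hD x).ne').neg
    rw [hT.deriv, hd1, hX.deriv]
    have h1 := Real.cosh_sq_sub_sinh_sq x
    have h2 := Real.cosh_sq_sub_sinh_sq t
    rw [Real.sinh_neg]
    have hne : ((Real.cosh x + Real.cosh t) ^ 2) ≠ 0 := by positivity
    rw [← neg_div, div_eq_div_iff hne hne]
    nlinarith [sq_nonneg (Real.cosh x + Real.cosh t)]
end

section
/- Define u(x,t) = sinh(−t)/(cosh x + cosh t) and R(x,t) = (cosh t · cosh x + 1)/(sinh(−t)·(cosh x + cosh t)) for x ∈ ℝ, t < 0. Then −∂²/∂x² (log u)(x,t) = u(x,t)·R(x,t) for all x ∈ ℝ, t < 0, and R(x,t) > 0. -/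
/-! Up to the constant `log sinh(-t)`, `log u(·, t)` is `-log (cosh x + c)` with `c = cosh t`.
Its second derivative is `(1 + c cosh x)/(cosh x + c)²` by `cosh² - sinh² = 1`, and this is
`u · R` since the factor `sinh(-t)` of `u` cancels the one in the denominator of `R`. -/

namespace Real

variable {c : ℝ}

lemma cosh_add_pos (hc : -1 < c) (x : ℝ) : 0 < cosh x + c := by
  linarith [one_le_cosh x]

lemma deriv_log_cosh_add (hc : -1 < c) :
    deriv (fun y => log (cosh y + c)) = fun y => sinh y / (cosh y + c) := by
  funext x
  exact (((hasDerivAt_cosh x).add_const c).log (cosh_add_pos hc x).ne').deriv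

lemma hasDerivAt_sinh_div_cosh_add {x : ℝ} (hx : cosh x + c ≠ 0) :
    HasDerivAt (fun y => sinh y / (cosh y + c)) ((1 + c * cosh x) / (cosh x + c) ^ 2) x := by
  refine ((hasDerivAt_sinh x).div ((hasDerivAt_cosh x).add_const c) hx).congr_deriv ?_
  rw [← cosh_sq_sub_sinh_sq x]
  ring

lemma deriv_deriv_log_cosh_add (hc : -1 < c) (x : ℝ) :
    deriv (deriv (fun y => log (cosh y + c))) x = (1 + c * cosh x) / (cosh x + c) ^ 2 := by
  rw [deriv_log_cosh_add hc]
  exact (hasDerivAt_sinh_div_cosh_add (cosh_add_pos hc x).ne').deriv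

end Real

open Real in
/-- For the Rosenau solution `u(x,t) = sinh(-t)/(cosh x + cosh t)`, the scalar curvature
`R(x,t) = (cosh t · cosh x + 1)/(sinh(-t)(cosh x + cosh t))` satisfies
`-∂²/∂x² (log u) = u · R` and `R > 0` for `t < 0`. -/
theorem rosenau_scalar_curvature (u R : ℝ → ℝ → ℝ)
    (hu : ∀ x t : ℝ, u x t = Real.sinh (-t) / (Real.cosh x + Real.cosh t))
    (hR : ∀ x t : ℝ, R x t = (Real.cosh t * Real.cosh x + 1)
      / (Real.sinh (-t) * (Real.cosh x + Real.cosh t))) :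
    ∀ x t : ℝ, t < 0 →
      -(deriv (deriv (fun y => Real.log (u y t))) x) = u x t * R x t ∧
      0 < R x t := by
  intro x t ht
  have hsinh : 0 < sinh (-t) := sinh_pos_iff.2 (neg_pos.2 ht)
  have hc : -1 < cosh t := by linarith [one_le_cosh t]
  have hlog : (fun y => log (u y t)) = fun y => log (sinh (-t)) - log (cosh y + cosh t) := by
    funext y
    rw [hu, log_div hsinh.ne' (cosh_add_pos hc y).ne']
  refine ⟨?_, ?_⟩
  · rw [hlog, deriv_const_sub', deriv.fun_neg, neg_neg, deriv_deriv_log_cosh_add hc, hu, hR]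
    field_simp
    ring
  · rw [hR]
    have hnum : 0 < cosh t * cosh x + 1 := by positivity
    positivity
end

section
/- Define R(x,t) = (cosh t · cosh x + 1)/(sinh(−t)·(cosh x + cosh t)) for x ∈ ℝ, t < 0. Then: (i) ∂R/∂x(x,t) = sinh x · sinh(−t)/(cosh x + cosh t)², so for each fixed t < 0 the function x ↦ R(x,t) is even and strictly increasing on [0,∞); (ii) lim_{x→∞} R(x,t) = coth(−t), so sup_{x∈ℝ} R(x,t) = coth(−t); and (iii) for each fixed x ∈ ℝ, lim_{t→0⁻} R(x,t)·tanh(−t) = 1. -/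
/-!
With `a = -t > 0`, the curvature splits as `R(x,t) = coth a - sinh a / (cosh x + cosh a)`,
using `cosh² a - sinh² a = 1`. Since `cosh x` is even, strictly increasing on `[0, ∞)` and tends
to `∞`, the subtracted term is even, positive, strictly decreasing in `|x|` and tends to `0`,
which gives (i) and (ii). For (iii), `R(x,t) · tanh(-t)` is, away from `t = 0`, the continuous
function `(cosh t cosh x + 1) / ((cosh x + cosh t) cosh t)`, whose value at `t = 0` is `1`.
-/

open Filter Set Real

noncomputable def rosenauCurvature (x t : ℝ) : ℝ :=
  (cosh t * cosh x + 1) / (sinh (-t) * (cosh x + cosh t))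

theorem tendsto_cosh_atTop : Tendsto cosh atTop atTop :=
  tendsto_atTop_mono' _ ((eventually_ge_atTop 0).mono fun x hx =>
    (self_le_sinh_iff.2 hx).trans (sinh_lt_cosh x).le) tendsto_id

theorem cosh_add_cosh_pos (x t : ℝ) : 0 < cosh x + cosh t := by positivity

namespace rosenauCurvature

variable {t : ℝ}

theorem neg_left (x t : ℝ) : rosenauCurvature (-x) t = rosenauCurvature x t := by
  simp only [rosenauCurvature, cosh_neg]

theorem eq_coth_sub (ht : t ≠ 0) (x : ℝ) :
    rosenauCurvature x t = cosh (-t) / sinh (-t) - sinh (-t) / (cosh x + cosh t) := by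
  have hs : sinh (-t) ≠ 0 := by simpa using ht
  have hpyth : sinh (-t) ^ 2 = cosh t ^ 2 - 1 := by
    rw [← cosh_neg t]; linarith [cosh_sq (-t)]
  have := (cosh_add_cosh_pos x t).ne'
  rw [rosenauCurvature, cosh_neg]
  field_simp
  linear_combination hpyth

theorem hasDerivAt (ht : t ≠ 0) (x : ℝ) :
    HasDerivAt (rosenauCurvature · t)
      (sinh x * sinh (-t) / (cosh x + cosh t) ^ 2) x := by
  have hinv := ((hasDerivAt_cosh x).add_const (cosh t)).inv (cosh_add_cosh_pos x t).ne'
  have hR := (hinv.const_mul (sinh (-t))).const_sub (cosh (-t) / sinh (-t))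
  refine (hR.congr_of_eventuallyEq (Eventually.of_forall fun y => ?_)).congr_deriv (by ring)
  simp only [eq_coth_sub ht, div_eq_mul_inv (sinh (-t)), Pi.inv_apply]

theorem strictMonoOn_Ici (ht : t < 0) : StrictMonoOn (rosenauCurvature · t) (Ici 0) := by
  intro x hx y hy hxy
  have hs : 0 < sinh (-t) := sinh_pos_iff.2 (neg_pos.2 ht)
  have hcosh : cosh x < cosh y := cosh_lt_cosh.2 <| by
    rwa [abs_of_nonneg hx, abs_of_nonneg hy]
  simp only [eq_coth_sub ht.ne, sub_lt_sub_iff_left]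
  gcongr

theorem lt_coth (ht : t < 0) (x : ℝ) : rosenauCurvature x t < cosh (-t) / sinh (-t) := by
  have hs : 0 < sinh (-t) := sinh_pos_iff.2 (neg_pos.2 ht)
  have := cosh_add_cosh_pos x t
  rw [eq_coth_sub ht.ne, sub_lt_self_iff]
  positivity

theorem tendsto_atTop (ht : t ≠ 0) :
    Tendsto (rosenauCurvature · t) atTop (nhds (cosh (-t) / sinh (-t))) := by
  have hdecay : Tendsto (fun x => sinh (-t) / (cosh x + cosh t)) atTop (nhds 0) :=
    tendsto_const_nhds.div_atTop (tendsto_atTop_add_const_right _ _ tendsto_cosh_atTop)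
  simpa only [eq_coth_sub ht, sub_zero] using tendsto_const_nhds.sub hdecay

theorem iSup_eq_coth (ht : t < 0) : ⨆ x, rosenauCurvature x t = cosh (-t) / sinh (-t) :=
  IsLUB.ciSup_eq
    ⟨forall_mem_range.2 fun x => (lt_coth ht x).le,
     fun _ hb => le_of_tendsto (tendsto_atTop ht.ne) (Eventually.of_forall fun x => hb ⟨x, rfl⟩)⟩

theorem mul_tanh_neg (ht : t ≠ 0) (x : ℝ) :
    rosenauCurvature x t * tanh (-t) = (cosh t * cosh x + 1) / ((cosh x + cosh t) * cosh t) := by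
  have hs : sinh t ≠ 0 := sinh_ne_zero.2 ht
  have := (cosh_add_cosh_pos x t).ne'
  have := (cosh_pos t).ne'
  rw [rosenauCurvature, tanh_eq_sinh_div_cosh, sinh_neg, cosh_neg]
  field_simp

theorem tendsto_mul_tanh_neg (x : ℝ) :
    Tendsto (fun t => rosenauCurvature x t * tanh (-t)) (nhdsWithin 0 {0}ᶜ) (nhds 1) := by
  have hcont : ContinuousAt
      (fun t => (cosh t * cosh x + 1) / ((cosh x + cosh t) * cosh t)) 0 :=
    by fun_prop (disch := simp only [cosh_zero]; positivity)
  have hvalue : (cosh 0 * cosh x + 1) / ((cosh x + cosh 0) * cosh 0) = 1 := by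
    rw [cosh_zero, one_mul, mul_one, add_comm, div_self (by positivity)]
  refine (hvalue ▸ hcont.tendsto.mono_left nhdsWithin_le_nhds).congr' ?_
  exact eventually_nhdsWithin_of_forall fun t ht => (mul_tanh_neg ht x).symm

end rosenauCurvature

/-- Properties of the scalar curvature `R(x,t)` of the Rosenau solution:
(i) `∂R/∂x = sinh x · sinh(-t)/(cosh x + cosh t)²`, `R(·,t)` is even and strictly
increasing on `[0,∞)`; (ii) `R(x,t) → coth(-t)` as `x → ∞` and
`sup_x R(x,t) = coth(-t)`; (iii) for fixed `x`, `R(x,t)·tanh(-t) → 1` as `t → 0⁻`. -/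
theorem rosenau_curvature_properties (R : ℝ → ℝ → ℝ)
    (hR : ∀ x t : ℝ, R x t = (Real.cosh t * Real.cosh x + 1)
      / (Real.sinh (-t) * (Real.cosh x + Real.cosh t))) :
    ∀ t : ℝ, t < 0 →
      (∀ x : ℝ, HasDerivAt (fun y => R y t)
        (Real.sinh x * Real.sinh (-t) / (Real.cosh x + Real.cosh t) ^ 2) x) ∧
      (∀ x : ℝ, R (-x) t = R x t) ∧
      StrictMonoOn (fun x => R x t) (Set.Ici 0) ∧
      Tendsto (fun x => R x t) atTop (nhds (Real.cosh (-t) / Real.sinh (-t))) ∧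
      (⨆ x : ℝ, R x t) = Real.cosh (-t) / Real.sinh (-t) ∧
      (∀ x : ℝ, Tendsto (fun s => R x s * Real.tanh (-s))
        (nhdsWithin 0 (Set.Iio 0)) (nhds 1)) := by
  obtain rfl : R = rosenauCurvature := funext fun x => funext (hR x)
  intro t ht
  exact ⟨rosenauCurvature.hasDerivAt ht.ne, fun x => rosenauCurvature.neg_left x t,
    rosenauCurvature.strictMonoOn_Ici ht, rosenauCurvature.tendsto_atTop ht.ne,
    rosenauCurvature.iSup_eq_coth ht, fun x => (rosenauCurvature.tendsto_mul_tanh_neg x).mono_left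
      (nhdsWithin_mono _ fun _ hs => ne_of_lt hs)⟩
end

section
/- For every t < 0, the integral identity ∫₀^∞ sinh x · (sinh(−t))^{3/2}/(cosh x + cosh t)^{5/2} dx = (2/3)·(sinh(−t)/(1 + cosh t))^{3/2} holds. Moreover the function t ↦ (sinh(−t)/(1 + cosh t))^{3/2} is strictly decreasing on (−∞,0) and tends to 0 as t → 0⁻. -/
open Filter Set MeasureTheory

/-! The integral is elementary: `x ↦ (cosh x + c)^{1-p}/(1-p)` is an antiderivative of
`sinh x (cosh x + c)^{-p}`, which yields the closed form. By the half-angle formula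
`sinh(-t)/(1 + cosh t) = tanh(-t/2)`, and monotonicity and the limit at `0⁻` follow from those
of `tanh`. -/

namespace Real

theorem continuous_tanh : Continuous tanh := by
  simp only [funext tanh_eq_sinh_div_cosh]
  exact continuous_sinh.div continuous_cosh fun x => (cosh_pos x).ne'

theorem tanh_strictMono : StrictMono tanh := by
  intro a b hab
  rw [tanh_eq_sinh_div_cosh, tanh_eq_sinh_div_cosh, div_lt_div_iff₀ (cosh_pos a) (cosh_pos b)]
  have := sinh_sub b a
  nlinarith [sinh_pos_iff.2 (sub_pos.2 hab)]

theorem sinh_div_one_add_cosh (t : ℝ) : sinh t / (1 + cosh t) = tanh (t / 2) := by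
  have hsinh : sinh t = 2 * sinh (t / 2) * cosh (t / 2) := by
    rw [← sinh_two_mul, mul_div_cancel₀ t two_ne_zero]
  have hcosh : 1 + cosh t = 2 * cosh (t / 2) ^ 2 := by
    have := cosh_two_mul (t / 2)
    rw [mul_div_cancel₀ t two_ne_zero] at this
    linarith [cosh_sq' (t / 2)]
  have hc : cosh (t / 2) ≠ 0 := (cosh_pos _).ne'
  rw [hsinh, hcosh, tanh_eq_sinh_div_cosh]
  field_simp

theorem tendsto_cosh_atTop : Tendsto cosh atTop atTop :=
  tendsto_atTop_mono' atTop ((eventually_ge_atTop 0).mono fun x hx =>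
    (self_le_sinh_iff.2 hx).trans (sinh_lt_cosh x).le) tendsto_id

theorem integral_Ioi_sinh_mul_cosh_add_rpow_neg {c p : ℝ} (hc : -1 < c) (hp : 1 < p) :
    ∫ x in Ioi (0 : ℝ), sinh x * (cosh x + c) ^ (-p) = (1 + c) ^ (1 - p) / (p - 1) := by
  have hpos : ∀ x, 0 < cosh x + c := fun x => by linarith [one_le_cosh x]
  have hderiv : ∀ x, HasDerivAt (fun x => (cosh x + c) ^ (1 - p) / (1 - p))
      (sinh x * (cosh x + c) ^ (-p)) x := by
    intro x
    refine ((((hasDerivAt_cosh x).add_const c).rpow_const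
      (Or.inl (hpos x).ne')).div_const (1 - p)).congr_deriv ?_
    rw [sub_sub_cancel_left]
    field_simp [(sub_neg.2 hp).ne]
  have hlim : Tendsto (fun x => (cosh x + c) ^ (1 - p) / (1 - p)) atTop (nhds 0) := by
    have := ((tendsto_rpow_neg_atTop (sub_pos.2 hp)).comp
      (tendsto_atTop_add_const_right _ c tendsto_cosh_atTop)).div_const (1 - p)
    simpa [Function.comp_def] using this
  rw [integral_Ioi_of_hasDerivAt_of_nonneg' (fun x _ => hderiv x)
    (fun x hx => mul_nonneg (sinh_nonneg_iff.2 (le_of_lt hx)) (rpow_nonneg (hpos x).le _)) hlim,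
    cosh_zero, add_comm]
  field_simp [(sub_neg.2 hp).ne, (sub_pos.2 hp).ne']
  ring

end Real

open Real

theorem integral_Ioi_rosenau {t : ℝ} (ht : t < 0) :
    ∫ x in Ioi (0 : ℝ),
        sinh x * sinh (-t) ^ ((3 : ℝ) / 2) / (cosh x + cosh t) ^ ((5 : ℝ) / 2)
      = 2 / 3 * (sinh (-t) / (1 + cosh t)) ^ ((3 : ℝ) / 2) := by
  have hs : 0 ≤ sinh (-t) := sinh_nonneg_iff.2 (by linarith)
  have hd : 0 < 1 + cosh t := by linarith [one_le_cosh t]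
  have hc : -1 < cosh t := by linarith [one_le_cosh t]
  calc _ = ∫ x in Ioi (0 : ℝ),
          sinh (-t) ^ ((3 : ℝ) / 2) * (sinh x * (cosh x + cosh t) ^ (-(5 / 2 : ℝ))) := by
        congr 1; funext x
        rw [rpow_neg (by linarith [one_le_cosh x, one_le_cosh t])]
        ring
    _ = _ := by
        rw [integral_const_mul, integral_Ioi_sinh_mul_cosh_add_rpow_neg hc (by norm_num),
          div_rpow hs hd.le, show (1 : ℝ) - 5 / 2 = -(3 / 2) by norm_num, rpow_neg hd.le]
        ring

/-- For every `t < 0`,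
`∫₀^∞ sinh x · sinh(-t)^{3/2}/(cosh x + cosh t)^{5/2} dx = (2/3)(sinh(-t)/(1 + cosh t))^{3/2}`;
moreover `t ↦ (sinh(-t)/(1 + cosh t))^{3/2}` is strictly decreasing on `(-∞, 0)` and tends
to `0` as `t → 0⁻`. -/
theorem rosenau_product_L1_norm :
    (∀ t : ℝ, t < 0 →
      ∫ x in Set.Ioi (0 : ℝ),
        Real.sinh x * Real.sinh (-t) ^ ((3 : ℝ) / 2)
          / (Real.cosh x + Real.cosh t) ^ ((5 : ℝ) / 2)
        = 2 / 3 * (Real.sinh (-t) / (1 + Real.cosh t)) ^ ((3 : ℝ) / 2)) ∧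
    StrictAntiOn (fun t => (Real.sinh (-t) / (1 + Real.cosh t)) ^ ((3 : ℝ) / 2))
      (Set.Iio 0) ∧
    Tendsto (fun t => (Real.sinh (-t) / (1 + Real.cosh t)) ^ ((3 : ℝ) / 2))
      (nhdsWithin 0 (Set.Iio 0)) (nhds 0) := by
  have htanh : ∀ t, sinh (-t) / (1 + cosh t) = tanh (-t / 2) := fun t => by
    rw [← cosh_neg, sinh_div_one_add_cosh]
  refine ⟨fun t ht => integral_Ioi_rosenau ht, ?_, ?_⟩ <;> simp only [htanh]
  · intro a _ b hb hab
    have hb0 : 0 ≤ tanh (-b / 2) :=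
      tanh_zero ▸ tanh_strictMono.monotone (by linarith [mem_Iio.1 hb])
    exact rpow_lt_rpow hb0 (tanh_strictMono (by linarith)) (by norm_num)
  · have hcont : Continuous fun t : ℝ => tanh (-t / 2) ^ ((3 : ℝ) / 2) :=
      (continuous_tanh.comp (by fun_prop)).rpow_const fun _ => Or.inr (by norm_num)
    simpa using (hcont.tendsto 0).mono_left nhdsWithin_le_nhds
end
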